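/- Let (Ω, Σ) and (Ω', Σ') be measurable spaces, H a separable complex Hilbert space, and let M₁ ∈ O_Σ(H) and M₂ ∈ O_{Σ'}(H) be jointly measurable observables (POVMs), i.e. there exists a POVM M ∈ O_{Σ⊗Σ'}(H) with M(X × Ω') = M₁(X) and M(Ω × Y) = M₂(Y) for all X ∈ Σ, Y ∈ Σ'. If M₁ is extremal in O_Σ(H) or M₂ is extremal in O_{Σ'}(H), then the joint observable M is unique. -/

import Mathlib

open scoped ComplexOrder ComplexInnerProductSpace Topology

noncomputable section

/-- A normalized positive operator valued measure (POVM, observable) on the measurable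
space `Ω` with values in `L(H)`: positive operator values, `M univ = 1`, and σ-additivity
in the weak operator topology. -/
def IsPOVM {Ω : Type*} [MeasurableSpace Ω] {H : Type*}
    [NormedAddCommGroup H] [InnerProductSpace ℂ H] [CompleteSpace H]
    (M : Set Ω → H →L[ℂ] H) : Prop :=
  (∀ X : Set Ω, MeasurableSet X → (M X).IsPositive) ∧
  M Set.univ = 1 ∧
  ∀ f : ℕ → Set Ω, (∀ n, MeasurableSet (f n)) → Pairwise (Function.onFun Disjoint f) →
    ∀ x y : H, HasSum (fun n => ⟪x, M (f n) y⟫) ⟪x, M (⋃ n, f n) y⟫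

/-- A POVM is extremal in the convex set of all POVMs on the same σ-algebra. -/
def IsExtremalPOVM {Ω : Type*} [MeasurableSpace Ω] {H : Type*}
    [NormedAddCommGroup H] [InnerProductSpace ℂ H] [CompleteSpace H]
    (M : Set Ω → H →L[ℂ] H) : Prop :=
  IsPOVM M ∧ ∀ M₁ M₂ : Set Ω → H →L[ℂ] H, IsPOVM M₁ → IsPOVM M₂ →
    ∀ t : ℝ, 0 < t → t < 1 →
    (∀ X : Set Ω, MeasurableSet X → M X = (t : ℂ) • M₁ X + ((1 - t : ℝ) : ℂ) • M₂ X) →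
    ∀ X : Set Ω, MeasurableSet X → M₁ X = M₂ X

/-!
If `M` and `M'` both have marginals `M₁`, `M₂`, then for measurable `Y ⊆ Ω'` the maps
`U ↦ M (U × Y) + M' (U × Yᶜ)` and `U ↦ M' (U × Y) + M (U × Yᶜ)` are again observables
(normalisation uses that `M` and `M'` agree on `Ω × Y`) and their midpoint is `M₁`.
Extremality of `M₁` makes them equal; together with
`M (X × Y) + M (X × Yᶜ) = M₁ X = M' (X × Y) + M' (X × Yᶜ)` this gives `M = M'` on measurable
rectangles, hence on the product σ-algebra by the π-λ theorem. Swapping the factors handles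
an extremal `M₂`.
-/

open Set

theorem ContinuousLinearMap.ext_inner {E : Type*} [NormedAddCommGroup E] [InnerProductSpace ℂ E]
    {A B : E →L[ℂ] E} (h : ∀ x y : E, ⟪x, A y⟫ = ⟪x, B y⟫) : A = B :=
  ContinuousLinearMap.ext fun y => ext_inner_left ℂ fun x => h x y

section

variable {Ω Ω' : Type*} [MeasurableSpace Ω] [MeasurableSpace Ω'] {H : Type*}
  [NormedAddCommGroup H] [InnerProductSpace ℂ H] [CompleteSpace H]

namespace IsPOVM

variable {M : Set Ω → H →L[ℂ] H}

theorem map_empty (hM : IsPOVM M) : M ∅ = 0 := by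
  refine ContinuousLinearMap.ext_inner fun x y => ?_
  have h := hM.2.2 (fun _ => ∅) (fun _ => .empty) (fun _ _ _ => disjoint_bot_left) x y
  rw [iUnion_empty] at h
  simpa using (summable_const_iff _).mp h.summable

theorem map_union (hM : IsPOVM M) {X Y : Set Ω} (hX : MeasurableSet X) (hY : MeasurableSet Y)
    (hXY : Disjoint X Y) : M (X ∪ Y) = M X + M Y := by
  set f : ℕ → Set Ω := fun n => if n = 0 then X else if n = 1 then Y else ∅
  have hf : ∀ n, MeasurableSet (f n) := by
    intro n; dsimp only [f]; split_ifs <;> simp [hX, hY]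
  have hdisj : Pairwise (Function.onFun Disjoint f) := by
    intro i j hij; dsimp only [f, Function.onFun]; split_ifs <;> simp_all [hXY.symm]
  have hunion : ⋃ n, f n = X ∪ Y := by
    ext a; simp only [mem_iUnion, mem_union, f]
    constructor
    · rintro ⟨n, hn⟩; split_ifs at hn <;> simp_all
    · rintro (h | h)
      exacts [⟨0, by simpa using h⟩, ⟨1, by simpa using h⟩]
  refine ContinuousLinearMap.ext_inner fun x y => ?_
  have h := hM.2.2 f hf hdisj x y
  rw [hunion] at h
  have h₀₁ : HasSum (fun n => ⟪x, M (f n) y⟫) (∑ n ∈ {0, 1}, ⟪x, M (f n) y⟫) := by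
    refine hasSum_sum_of_ne_finset_zero fun n hn => ?_
    simp only [Finset.mem_insert, Finset.mem_singleton, not_or] at hn
    simp [f, hn.1, hn.2, hM.map_empty]
  rw [h.unique h₀₁]
  simp [f]

theorem map_compl (hM : IsPOVM M) {X : Set Ω} (hX : MeasurableSet X) : M Xᶜ = 1 - M X := by
  rw [eq_sub_iff_add_eq', ← hM.2.1, ← union_compl_self X, hM.map_union hX hX.compl
    disjoint_compl_right]

theorem map (hM : IsPOVM M) {g : Ω → Ω'} (hg : Measurable g) :
    IsPOVM fun Z : Set Ω' => M (g ⁻¹' Z) := by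
  refine ⟨fun X hX => hM.1 _ (hg hX), by simpa using hM.2.1, fun f hf hdisj x y => ?_⟩
  simpa only [preimage_iUnion] using
    hM.2.2 (fun n => g ⁻¹' f n) (fun n => hg (hf n)) (fun i j hij => (hdisj hij).preimage g) x y

theorem eq_of_eq_on_generateFrom {M' : Set Ω → H →L[ℂ] H} (hM : IsPOVM M) (hM' : IsPOVM M')
    {C : Set (Set Ω)} (hgen : ‹MeasurableSpace Ω› = .generateFrom C) (hC : IsPiSystem C)
    (hMC : ∀ s ∈ C, M s = M' s) {s : Set Ω} (hs : MeasurableSet s) : M s = M' s := by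
  induction s, hs using MeasurableSpace.induction_on_inter hgen hC with
  | empty => rw [hM.map_empty, hM'.map_empty]
  | basic t ht => exact hMC t ht
  | compl t ht h => rw [hM.map_compl ht, hM'.map_compl ht, h]
  | iUnion f hdisj hf h =>
    refine ContinuousLinearMap.ext_inner fun x y => ?_
    refine (hM.2.2 f hf hdisj x y).unique ?_
    simpa only [h] using hM'.2.2 f hf hdisj x y

end IsPOVM

theorem IsPOVM.eq_of_eq_on_prod {M M' : Set (Ω × Ω') → H →L[ℂ] H} (hM : IsPOVM M)
    (hM' : IsPOVM M')
    (h : ∀ X Y, MeasurableSet X → MeasurableSet Y → M (X ×ˢ Y) = M' (X ×ˢ Y))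
    {Z : Set (Ω × Ω')} (hZ : MeasurableSet Z) : M Z = M' Z := by
  refine hM.eq_of_eq_on_generateFrom hM' generateFrom_prod.symm isPiSystem_prod ?_ hZ
  rintro _ ⟨X, hX, Y, hY, rfl⟩
  exact h X Y hX hY

def splice (P Q : Set (Ω × Ω') → H →L[ℂ] H) (Y : Set Ω') (U : Set Ω) : H →L[ℂ] H :=
  P (U ×ˢ Y) + Q (U ×ˢ Yᶜ)

theorem IsPOVM.splice_self {P : Set (Ω × Ω') → H →L[ℂ] H} (hP : IsPOVM P) {Y : Set Ω'}
    (hY : MeasurableSet Y) {U : Set Ω} (hU : MeasurableSet U) :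
    splice P P Y U = P (U ×ˢ univ) := by
  rw [splice, ← hP.map_union (hU.prod hY) (hU.prod hY.compl)
    (disjoint_compl_right.set_prod_right _ _), ← prod_union, union_compl_self]

theorem isPOVM_splice {P Q : Set (Ω × Ω') → H →L[ℂ] H} (hP : IsPOVM P) (hQ : IsPOVM Q)
    {Y : Set Ω'} (hY : MeasurableSet Y) (hPQ : P (univ ×ˢ Y) = Q (univ ×ˢ Y)) :
    IsPOVM (splice P Q Y) := by
  refine ⟨fun U hU => (hP.1 _ (hU.prod hY)).add (hQ.1 _ (hU.prod hY.compl)), ?_,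
    fun f hf hdisj x y => ?_⟩
  · rw [splice, hPQ, ← splice, hQ.splice_self hY .univ, univ_prod_univ, hQ.2.1]
  · have hdisj' (Y' : Set Ω') : Pairwise (Function.onFun Disjoint fun n => f n ×ˢ Y') :=
      fun i j hij => (hdisj hij).set_prod_left _ _
    have hsum := (hP.2.2 _ (fun n => (hf n).prod hY) (hdisj' Y) x y).add
      (hQ.2.2 _ (fun n => (hf n).prod hY.compl) (hdisj' Yᶜ) x y)
    simpa only [splice, add_apply, inner_add_right, ← iUnion_prod_const]
      using hsum

theorem IsExtremalPOVM.apply_prod_eq_of_marginals {M₁ : Set Ω → H →L[ℂ] H}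
    (hext : IsExtremalPOVM M₁) {P Q : Set (Ω × Ω') → H →L[ℂ] H} (hP : IsPOVM P)
    (hQ : IsPOVM Q) (hP₁ : ∀ X, MeasurableSet X → P (X ×ˢ univ) = M₁ X)
    (hQ₁ : ∀ X, MeasurableSet X → Q (X ×ˢ univ) = M₁ X)
    (hPQ₂ : ∀ Y, MeasurableSet Y → P (univ ×ˢ Y) = Q (univ ×ˢ Y))
    {X : Set Ω} {Y : Set Ω'} (hX : MeasurableSet X) (hY : MeasurableSet Y) :
    P (X ×ˢ Y) = Q (X ×ˢ Y) := by
  have hPY {U} (hU : MeasurableSet U) := (hP.splice_self hY hU).trans (hP₁ U hU)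
  have hQY {U} (hU : MeasurableSet U) := (hQ.splice_self hY hU).trans (hQ₁ U hU)
  have hmid : ∀ U, MeasurableSet U →
      M₁ U = ((1 / 2 : ℝ) : ℂ) • splice P Q Y U + ((1 - 1 / 2 : ℝ) : ℂ) • splice Q P Y U := by
    intro U hU
    have hPU := hPY hU
    have hQU := hQY hU
    simp only [splice] at hPU hQU ⊢
    push_cast
    linear_combination (norm := module) -(1 / 2 : ℂ) • (hPU + hQU)
  have hPQ := hext.2 _ _ (isPOVM_splice hP hQ hY (hPQ₂ Y hY))
    (isPOVM_splice hQ hP hY (hPQ₂ Y hY).symm)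
    (1 / 2) (by norm_num) (by norm_num) hmid X hX
  have hPQ₁ := (hPY hX).trans (hQY hX).symm
  simp only [splice] at hPQ hPQ₁
  linear_combination (norm := module) (1 / 2 : ℂ) • (hPQ + hPQ₁)

end

theorem joint_observable_unique_of_extremal_marginal_general
    {Ω Ω' : Type*} [MeasurableSpace Ω] [MeasurableSpace Ω']
    {H : Type*} [NormedAddCommGroup H] [InnerProductSpace ℂ H] [CompleteSpace H]
    (M₁ : Set Ω → H →L[ℂ] H) (M₂ : Set Ω' → H →L[ℂ] H)
    (M M' : Set (Ω × Ω') → H →L[ℂ] H) (hM : IsPOVM M) (hM' : IsPOVM M')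
    (hmarg₁ : ∀ X : Set Ω, MeasurableSet X → M (X ×ˢ (Set.univ : Set Ω')) = M₁ X)
    (hmarg₂ : ∀ Y : Set Ω', MeasurableSet Y → M ((Set.univ : Set Ω) ×ˢ Y) = M₂ Y)
    (hmarg₁' : ∀ X : Set Ω, MeasurableSet X → M' (X ×ˢ (Set.univ : Set Ω')) = M₁ X)
    (hmarg₂' : ∀ Y : Set Ω', MeasurableSet Y → M' ((Set.univ : Set Ω) ×ˢ Y) = M₂ Y)
    (hext : IsExtremalPOVM M₁ ∨ IsExtremalPOVM M₂) :
    ∀ Z : Set (Ω × Ω'), MeasurableSet Z → M Z = M' Z := by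
  refine fun Z hZ => hM.eq_of_eq_on_prod hM' (fun X Y hX hY => ?_) hZ
  rcases hext with hext₁ | hext₂
  · exact hext₁.apply_prod_eq_of_marginals hM hM' hmarg₁ hmarg₁'
      (fun Y hY => (hmarg₂ Y hY).trans (hmarg₂' Y hY).symm) hX hY
  · have hswap := hext₂.apply_prod_eq_of_marginals (hM.map measurable_swap)
      (hM'.map measurable_swap) (by simpa only [preimage_swap_prod] using hmarg₂)
      (by simpa only [preimage_swap_prod] using hmarg₂')
      (fun X hX => by simp only [preimage_swap_prod, hmarg₁ X hX, hmarg₁' X hX]) hY hX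
    simpa only [preimage_swap_prod] using hswap

/-- **Uniqueness of the joint observable** (items (b) & (e) of the paper). Let `M₁` and
`M₂` be jointly measurable POVMs on `(Ω, Σ)` and `(Ω', Σ')` with values in `L(H)`, `H`
separable, i.e. both are marginals of a joint POVM on the product σ-algebra. If `M₁` or
`M₂` is extremal, then the joint observable is unique: any two joint observables `M`, `M'`
agree on the product σ-algebra. -/
theorem joint_observable_unique_of_extremal_marginal
    {Ω Ω' : Type*} [MeasurableSpace Ω] [MeasurableSpace Ω']
    {H : Type*} [NormedAddCommGroup H] [InnerProductSpace ℂ H] [CompleteSpace H]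
    [TopologicalSpace.SeparableSpace H]
    (M₁ : Set Ω → H →L[ℂ] H) (M₂ : Set Ω' → H →L[ℂ] H)
    (hM₁ : IsPOVM M₁) (hM₂ : IsPOVM M₂)
    (M M' : Set (Ω × Ω') → H →L[ℂ] H) (hM : IsPOVM M) (hM' : IsPOVM M')
    (hmarg₁ : ∀ X : Set Ω, MeasurableSet X → M (X ×ˢ (Set.univ : Set Ω')) = M₁ X)
    (hmarg₂ : ∀ Y : Set Ω', MeasurableSet Y → M ((Set.univ : Set Ω) ×ˢ Y) = M₂ Y)
    (hmarg₁' : ∀ X : Set Ω, MeasurableSet X → M' (X ×ˢ (Set.univ : Set Ω')) = M₁ X)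
    (hmarg₂' : ∀ Y : Set Ω', MeasurableSet Y → M' ((Set.univ : Set Ω) ×ˢ Y) = M₂ Y)
    (hext : IsExtremalPOVM M₁ ∨ IsExtremalPOVM M₂) :
    ∀ Z : Set (Ω × Ω'), MeasurableSet Z → M Z = M' Z :=
  joint_observable_unique_of_extremal_marginal_general M₁ M₂ M M' hM hM' hmarg₁ hmarg₂ hmarg₁'
    hmarg₂' hext
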